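/- Let G be a graph, Z ⊆ V(G), and suppose that N_G(v) ⊆ Z for every v ∈ Z and that every (k−1)-separation of G is Z-bad. Then the graph G − Z is k-connected (provided G − Z has more than k vertices). -/

import Mathlib

open SimpleGraph

/-- `{A, B}` is a separation of the graph `G` restricted to vertex set `W`:
`A ∪ B = W`, there is no edge between `A − B` and `B − A`, and both fragments
`A − B` and `B − A` are nonempty. -/
def IsSepOn {V : Type*} (G : SimpleGraph V) (W A B : Set V) : Prop :=
  A ∪ B = W ∧ (∀ a ∈ A \ B, ∀ b ∈ B \ A, ¬ G.Adj a b) ∧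
    (A \ B).Nonempty ∧ (B \ A).Nonempty

/-- `{A, B}` is a separation of `G`. -/
def IsSeparation {V : Type*} (G : SimpleGraph V) (A B : Set V) : Prop :=
  IsSepOn G Set.univ A B

/-- `{A, B}` is `Z`-good: `{A − Z, B − Z}` is a separation of `G − Z`. -/
def ZGood {V : Type*} (G : SimpleGraph V) (Z A B : Set V) : Prop :=
  IsSepOn G Zᶜ (A \ Z) (B \ Z)

/-- `G` is `k`-connected: more than `k` vertices, and deleting fewer than `k`
vertices leaves a connected graph. -/
def KConnected {V : Type*} (k : ℕ) (G : SimpleGraph V) : Prop :=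
  k < (Set.univ : Set V).ncard ∧
    ∀ X : Set V, X.ncard < k → (G.induce Xᶜ).Connected

/-- The graph `G / vw` obtained from `G` by contracting the edge `vw`:
the vertex `w` is removed and identified with `v`. -/
def contract {V : Type*} (G : SimpleGraph V) (v w : V) :
    SimpleGraph {x : V // x ≠ w} where
  Adj x y := x ≠ y ∧
    (G.Adj x y ∨ ((x : V) = v ∧ G.Adj w y) ∨ ((y : V) = v ∧ G.Adj w x))
  symm := by
    refine ⟨?_⟩
    rintro x y ⟨hxy, h⟩
    refine ⟨hxy.symm, ?_⟩
    rcases h with h | ⟨h1, h2⟩ | ⟨h1, h2⟩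
    · exact Or.inl h.symm
    · exact Or.inr (Or.inr ⟨h1, h2⟩)
    · exact Or.inr (Or.inl ⟨h1, h2⟩)
  loopless := by refine ⟨?_⟩; rintro x ⟨h, -⟩; exact h rfl

/-- The graph obtained from `G` by contracting the set `F` of edges:
its vertices are the connected components of the spanning subgraph with
edge set `F`, with components adjacent if `G` has an edge between them. -/
def contractEdges {V : Type*} (G : SimpleGraph V) (F : Set (Sym2 V)) :
    SimpleGraph (SimpleGraph.fromEdgeSet F).ConnectedComponent where
  Adj c d := c ≠ d ∧ ∃ x y, G.Adj x y ∧
    (SimpleGraph.fromEdgeSet F).connectedComponentMk x = c ∧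
    (SimpleGraph.fromEdgeSet F).connectedComponentMk y = d
  symm := by
    refine ⟨?_⟩
    rintro c d ⟨hcd, x, y, hxy, hx, hy⟩
    exact ⟨hcd.symm, y, x, hxy.symm, hy, hx⟩
  loopless := by refine ⟨?_⟩; rintro c ⟨h, -⟩; exact h rfl

/-- `G` has a `K_t`-minor: there are `t` pairwise disjoint nonempty connected
vertex sets (branch sets) with an edge between each pair. -/
def HasCliqueMinor {V : Type*} (G : SimpleGraph V) (t : ℕ) : Prop :=
  ∃ f : Fin t → Set V,
    (∀ i, (G.induce (f i)).Connected) ∧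
    (∀ i j, i ≠ j → Disjoint (f i) (f j)) ∧
    (∀ i j, i ≠ j → ∃ a ∈ f i, ∃ b ∈ f j, G.Adj a b)

/-!
If deleting a set `X` of fewer than `k` vertices disconnects `G − Z`, let `C` be the vertex set of
a component of `G − Z − X`. Then `{C ∪ X ∪ Z, V − Z − C}` is a separation of `G` with separator
`X`, because no vertex of `Z` has a neighbour outside `Z`; neither of its sides lies in `Z`,
contradicting the hypothesis.
-/

theorem exists_isSeparation_inter_eq_of_not_reachable {W : Type*} (H : SimpleGraph W) (X : Set W)
    {u v : ↥Xᶜ} (huv : ¬ (H.induce Xᶜ).Reachable u v) :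
    ∃ A B : Set W, IsSeparation H A B ∧ A ∩ B = X := by
  set C : Set W := {w | ∃ hw : w ∈ Xᶜ, (H.induce Xᶜ).Reachable u ⟨w, hw⟩}
  have hCX : Disjoint C X := Set.disjoint_left.2 fun _ ⟨hw, _⟩ => hw
  have huC : (u : W) ∈ C := ⟨u.2, Reachable.refl u⟩
  have hvC : (v : W) ∉ C := fun ⟨_, hv⟩ => huv hv
  refine ⟨C ∪ X, Cᶜ, ⟨?_, ?_, ?_, ?_⟩, ?_⟩
  · rw [Set.union_right_comm, Set.union_compl_self, Set.univ_union]
  · rintro a ⟨haC | haX, haC'⟩ b ⟨hbC, hbX⟩ hab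
    · obtain ⟨_, hua⟩ := haC
      have hb : b ∈ Xᶜ := fun h => hbX (Or.inr h)
      exact hbC ⟨hb, hua.trans (Adj.reachable (G := H.induce Xᶜ) (v := ⟨b, hb⟩) hab)⟩
    · exact haC' fun h => hCX.notMem_of_mem_left h haX
  · exact ⟨u, Or.inl huC, fun h => h huC⟩
  · exact ⟨v, hvC, by rintro (h | h); exacts [hvC h, v.2 h]⟩
  · rw [Set.union_inter_distrib_right, Set.inter_compl_self, Set.empty_union,
      Set.inter_eq_left.2 hCX.symm.subset_compl_right]

theorem connected_induce_compl_of_forall_isSeparation {W : Type*}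
    (H : SimpleGraph W) {X : Set W}
    (hX : Xᶜ.Nonempty) (hsep : ∀ A B : Set W, IsSeparation H A B → A ∩ B ≠ X) :
    (H.induce Xᶜ).Connected := by
  have : Nonempty ↥Xᶜ := hX.to_subtype
  refine ⟨fun u v => ?_⟩
  by_contra huv
  obtain ⟨A, B, hAB, hAB'⟩ := exists_isSeparation_inter_eq_of_not_reachable H X huv
  exact hsep A B hAB hAB'

theorem exists_isSeparation_of_isSeparation_induce_compl {V : Type*} {G : SimpleGraph V}
    {Z : Set V} (hZ : ∀ v ∈ Z, G.neighborSet v ⊆ Z) {A B : Set ↥Zᶜ}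
    (hAB : IsSeparation (G.induce Zᶜ) A B) :
    ∃ A' B' : Set V, IsSeparation G A' B' ∧ A' ∩ B' = Subtype.val '' (A ∩ B) ∧
      ¬ A' \ B' ⊆ Z ∧ ¬ B' \ A' ⊆ Z := by
  obtain ⟨hunion, hedge, ⟨a, ha⟩, ⟨b, hb⟩⟩ := hAB
  have hBZ : Disjoint (Subtype.val '' B) Z := by
    rw [Set.disjoint_left]
    rintro _ ⟨x, -, rfl⟩
    exact x.2
  have hdiffA : Subtype.val '' (A \ B) ⊆ (Subtype.val '' A ∪ Z) \ Subtype.val '' B := by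
    rw [Set.image_sdiff Subtype.val_injective]
    exact Set.sdiff_subset_sdiff_left Set.subset_union_left
  have hdiffB : Subtype.val '' B \ (Subtype.val '' A ∪ Z) = Subtype.val '' (B \ A) := by
    rw [Set.union_comm, ← Set.sdiff_sdiff, hBZ.sdiff_eq_left,
      Set.image_sdiff Subtype.val_injective]
  refine ⟨Subtype.val '' A ∪ Z, Subtype.val '' B, ⟨?_, ?_, ?_, ?_⟩, ?_, ?_, ?_⟩
  · rw [Set.union_right_comm, ← Set.image_union, hunion, Set.image_univ,
      Subtype.range_coe, Set.compl_union_self]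
  · rintro x ⟨hxA | hxZ, hxB⟩ y hy hxy
    · obtain ⟨x, hx, rfl⟩ := hxA
      rw [hdiffB] at hy
      obtain ⟨y, hy, rfl⟩ := hy
      exact hedge x ⟨hx, fun h => hxB ⟨x, h, rfl⟩⟩ y hy hxy
    · exact hBZ.notMem_of_mem_left hy.1 (hZ x hxZ hxy)
  · exact ⟨a, hdiffA ⟨a, ha, rfl⟩⟩
  · exact ⟨b, hdiffB ▸ ⟨b, hb, rfl⟩⟩
  · rw [Set.union_inter_distrib_right, hBZ.symm.inter_eq, Set.union_empty,
      Set.image_inter Subtype.val_injective]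
  · exact fun h => a.2 (h (hdiffA ⟨a, ha, rfl⟩))
  · exact fun h => b.2 (h (hdiffB ▸ ⟨b, hb, rfl⟩))

theorem stmt13_general {V : Type*} (G : SimpleGraph V) (k : ℕ)
    (Z : Set V) (hZnbr : ∀ v ∈ Z, G.neighborSet v ⊆ Z)
    (hbad : ∀ A B : Set V, IsSeparation G A B → (A ∩ B).ncard ≤ k - 1 →
      (A \ B ⊆ Z ∨ B \ A ⊆ Z))
    (hcard : k < (Zᶜ : Set V).ncard) :
    KConnected k (G.induce Zᶜ) := by
  have hcard' : k < (Set.univ : Set ↥Zᶜ).ncard := by rwa [Set.ncard_univ, Nat.card_coe_set_eq]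
  refine ⟨hcard', fun X hX => ?_⟩
  have hXc : Xᶜ.Nonempty := by
    rw [Set.nonempty_compl]
    rintro rfl
    omega
  refine connected_induce_compl_of_forall_isSeparation _ hXc fun A B hAB hABX => ?_
  obtain ⟨A', B', hsep, hinter, hA', hB'⟩ :=
    exists_isSeparation_of_isSeparation_induce_compl hZnbr hAB
  have hsmall : (A' ∩ B').ncard ≤ k - 1 := by
    rw [hinter, Set.ncard_image_of_injective _ Subtype.val_injective, hABX]
    omega
  exact (hbad A' B' hsep hsmall).elim hA' hB'

/-- If `N_G(v) ⊆ Z` for every `v ∈ Z` and every `(k−1)`-separation of `G` is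
`Z`-bad, then `G − Z` is `k`-connected (provided it has more than `k`
vertices). -/
theorem stmt13 {V : Type*} [Fintype V] (G : SimpleGraph V) (k : ℕ)
    (Z : Set V) (hZnbr : ∀ v ∈ Z, G.neighborSet v ⊆ Z)
    (hbad : ∀ A B : Set V, IsSeparation G A B → (A ∩ B).ncard ≤ k - 1 →
      (A \ B ⊆ Z ∨ B \ A ⊆ Z))
    (hcard : k < (Zᶜ : Set V).ncard) :
    KConnected k (G.induce Zᶜ) :=
  stmt13_general G k Z hZnbr hbad hcard
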